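/- arXiv:1308.4863 — 5 statements merged into one kernel-verified Lean document; each statement's English description precedes it below -/
import Mathlib

section
/- With q_n defined by N(t)^η = ∑_{n≥0} q_n(η) t^n / x_n!, the functions q_n satisfy the recurrence q_{n+1}(η) = η · (x_{n+1}/(n+1)) · ∑_{k=0}^n (x_n!/(x_k! x_{n-k}!)) · ((n-k+1)/x_{n-k+1}) · q_k(η-1) for all n ≥ 0 and all η. -/
/-!
`expS` and `logS` are compositions `g ∘ F` with `g = ∑ a k t^k`, so the chain rule gives
`(exp F)' = F' exp F` and `N' = (log N)' N`. A series is determined by its constant term and a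
linear ODE `f' = U f`, which yields `exp (F + G) = exp F exp G` and `exp (log N) = N`; hence
`N^η = N ⬝ N^(η-1)` and `(N^η)' = η N' N^(η-1)`. Comparing the coefficients of `t^n` and
substituting `[t^m] N = 1 / x_m!` gives the recurrence.
-/

open PowerSeries Finset

/-- Formal exponential of a power series (intended for series with zero constant term):
coefficientwise `exp F = ∑_k F^k / k!`, which is a finite sum in each coefficient. -/
noncomputable def expS (F : PowerSeries ℝ) : PowerSeries ℝ :=
  PowerSeries.mk fun n => ∑ k ∈ Finset.range (n + 1),
    (1 / (k.factorial : ℝ)) * PowerSeries.coeff n (F ^ k)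

/-- Formal logarithm of a power series (intended for series with constant term 1):
coefficientwise `log N = ∑_{k≥1} (-1)^{k+1} (N-1)^k / k`. -/
noncomputable def logS (N : PowerSeries ℝ) : PowerSeries ℝ :=
  PowerSeries.mk fun n => ∑ k ∈ Finset.range (n + 1),
    ((-1 : ℝ) ^ (k + 1) / (k : ℝ)) * PowerSeries.coeff n ((N - 1) ^ k)

/-- The formal power `N^η := exp (η · log N)`. -/
noncomputable def powS (N : PowerSeries ℝ) (η : ℝ) : PowerSeries ℝ :=
  expS (η • logS N)

/-- Deformed factorial `x_n! = x_1 x_2 ⋯ x_n`, with `x_0! = 1`. -/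
noncomputable def xfac (x : ℕ → ℝ) (n : ℕ) : ℝ := ∏ k ∈ Finset.Icc 1 n, x k

section Composition

variable {R : Type*} [CommSemiring R]

/-- The composition `g ∘ F` of `g = ∑ a k t^k` with `F` (meant without constant term). -/
noncomputable def seriesComp (a : ℕ → R) (F : R⟦X⟧) : R⟦X⟧ :=
  mk fun n => ∑ k ∈ range (n + 1), a k * coeff n (F ^ k)

lemma coeff_mul_pow_eq_zero_of_lt {F : R⟦X⟧} (hF : constantCoeff F = 0) (G : R⟦X⟧)
    {m k : ℕ} (hmk : m < k) : coeff m (G * F ^ k) = 0 :=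
  X_pow_dvd_iff.mp ((pow_dvd_pow_of_dvd (X_dvd_iff.mpr hF) k).mul_left G) m hmk

lemma coeff_mul_sum_pow_of_le {F : R⟦X⟧} (hF : constantCoeff F = 0) (a : ℕ → R)
    (G : R⟦X⟧) {i n : ℕ} (hin : i ≤ n) :
    coeff i (G * ∑ k ∈ range (n + 1), C (a k) * F ^ k) =
      ∑ k ∈ range (i + 1), a k * coeff i (G * F ^ k) := by
  simp only [mul_sum, map_sum, mul_left_comm G, coeff_C_mul]
  refine (sum_subset (range_subset_range.mpr (by omega)) fun k _ hk => ?_).symm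
  rw [coeff_mul_pow_eq_zero_of_lt hF G (by simpa using hk), mul_zero]

lemma coeff_seriesComp_of_le {F : R⟦X⟧} (hF : constantCoeff F = 0) (a : ℕ → R) {i n : ℕ}
    (hin : i ≤ n) :
    coeff i (seriesComp a F) = coeff i (∑ k ∈ range (n + 1), C (a k) * F ^ k) := by
  simpa [seriesComp] using (coeff_mul_sum_pow_of_le hF a 1 hin).symm

lemma coeff_succ_pow_mul_succ (F : R⟦X⟧) (k n : ℕ) :
    coeff (n + 1) (F ^ k) * (n + 1) = k * coeff n (F ^ (k - 1) * d⁄dX R F) := by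
  rw [← coeff_derivative, Derivation.leibniz_pow, smul_eq_mul, nsmul_eq_mul,
    ← map_natCast (C (R := R)), coeff_C_mul]

/-- The chain rule `(g ∘ F)' = (g' ∘ F) ⬝ F'`, coefficientwise. -/
lemma coeff_derivative_seriesComp (a : ℕ → R) (F : R⟦X⟧) (n : ℕ) :
    coeff n (d⁄dX R (seriesComp a F)) =
      ∑ j ∈ range (n + 1), (j + 1) * a (j + 1) * coeff n (d⁄dX R F * F ^ j) := by
  rw [coeff_derivative, seriesComp, coeff_mk, sum_mul, sum_range_succ']
  simp only [mul_assoc, coeff_succ_pow_mul_succ, Nat.cast_zero, zero_mul, mul_zero, add_zero]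
  refine sum_congr rfl fun j _ => ?_
  rw [Nat.add_sub_cancel, mul_comm (F ^ j)]
  push_cast
  ring

lemma coeff_mul_congr {A B : R⟦X⟧} {n : ℕ} (h : ∀ i ≤ n, coeff i A = coeff i B)
    (G : R⟦X⟧) : coeff n (G * A) = coeff n (G * B) := by
  simp only [coeff_mul]
  refine sum_congr rfl fun p hp => ?_
  rw [h p.2 (by have := mem_antidiagonal.mp hp; omega)]

end Composition

lemma eq_of_derivative_eq_mul {R : Type*} [CommRing R] [IsDomain R] [CharZero R]
    {U P Q : R⟦X⟧} (hP : d⁄dX R P = U * P) (hQ : d⁄dX R Q = U * Q)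
    (h0 : constantCoeff P = constantCoeff Q) : P = Q := by
  ext n
  induction n using Nat.strong_induction_on with
  | _ n ih =>
    match n with
    | 0 => simpa using h0
    | n + 1 =>
      refine mul_right_cancel₀ (Nat.cast_add_one_ne_zero n) ?_
      rw [← coeff_derivative, ← coeff_derivative, hP, hQ]
      exact coeff_mul_congr (fun i hi => ih i (by omega)) U

lemma expS_eq_seriesComp (F : ℝ⟦X⟧) :
    expS F = seriesComp (fun k => 1 / (k.factorial : ℝ)) F := rfl

lemma logS_eq_seriesComp (N : ℝ⟦X⟧) :
    logS N = seriesComp (fun k => (-1 : ℝ) ^ (k + 1) / k) (N - 1) := rfl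

lemma constantCoeff_expS (F : ℝ⟦X⟧) : constantCoeff (expS F) = 1 := by
  rw [← coeff_zero_eq_constantCoeff_apply]
  simp [expS]

lemma constantCoeff_logS (N : ℝ⟦X⟧) : constantCoeff (logS N) = 0 := by
  rw [← coeff_zero_eq_constantCoeff_apply]
  simp [logS]

lemma derivative_expS {F : ℝ⟦X⟧} (hF : constantCoeff F = 0) :
    d⁄dX ℝ (expS F) = d⁄dX ℝ F * expS F := by
  ext n
  have hcoeff (j : ℕ) : ((j : ℝ) + 1) * (1 / ((j + 1).factorial : ℝ)) = 1 / j.factorial := by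
    rw [Nat.factorial_succ]
    push_cast
    field_simp
  rw [expS_eq_seriesComp, coeff_derivative_seriesComp]
  simp only [hcoeff]
  rw [← coeff_mul_sum_pow_of_le hF _ _ le_rfl]
  exact (coeff_mul_congr (fun i hi => coeff_seriesComp_of_le hF _ hi) _).symm

/-- With `E = N - 1`, `(log N)'` agrees up to degree `n` with `E' ∑_{j ≤ n} (-E)^j`, and
`(∑_{j ≤ n} (-E)^j) (1 + E) = 1 - (-E)^(n+1)`. -/
lemma derivative_eq_derivative_logS_mul {N : ℝ⟦X⟧} (hN : constantCoeff N = 1) :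
    d⁄dX ℝ N = d⁄dX ℝ (logS N) * N := by
  ext n
  rw [logS_eq_seriesComp]
  set E := N - 1 with hE
  have hE0 : constantCoeff E = 0 := by simp [hE, hN]
  set S := ∑ j ∈ range (n + 1), C ((-1 : ℝ) ^ j) * E ^ j
  have hgeom : S * N = 1 - (-E) ^ (n + 1) := by
    have hS : S = ∑ j ∈ range (n + 1), (-E) ^ j :=
      sum_congr rfl fun j _ => by rw [neg_pow E, map_pow, map_neg, map_one]
    linear_combination hS * N - geom_sum_mul (-E) (n + 1)
  have hlog : ∀ i ≤ n, coeff i (d⁄dX ℝ (seriesComp (fun k => (-1 : ℝ) ^ (k + 1) / k) E)) =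
      coeff i (d⁄dX ℝ E * S) := by
    intro i hi
    rw [coeff_derivative_seriesComp, coeff_mul_sum_pow_of_le hE0 _ _ hi]
    refine sum_congr rfl fun j _ => ?_
    push_cast
    field_simp
    ring
  calc coeff n (d⁄dX ℝ N) = coeff n (d⁄dX ℝ E * (S * N)) := by
        rw [hgeom, mul_sub, mul_one, map_sub,
          coeff_mul_pow_eq_zero_of_lt (by simp [hE0]) _ n.lt_succ_self, sub_zero, hE, map_sub,
          Derivation.map_one_eq_zero, sub_zero]
    _ = _ := by
        rw [← mul_assoc, mul_comm _ N, mul_comm _ N]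
        exact (coeff_mul_congr hlog N).symm

lemma expS_add {F G : ℝ⟦X⟧} (hF : constantCoeff F = 0) (hG : constantCoeff G = 0) :
    expS (F + G) = expS F * expS G := by
  refine eq_of_derivative_eq_mul (derivative_expS (by simp [hF, hG])) ?_ ?_
  · rw [Derivation.leibniz, derivative_expS hF, derivative_expS hG, map_add, smul_eq_mul,
      smul_eq_mul]
    ring
  · simp [constantCoeff_expS]

lemma expS_logS {N : ℝ⟦X⟧} (hN : constantCoeff N = 1) : expS (logS N) = N :=
  eq_of_derivative_eq_mul (derivative_expS (constantCoeff_logS N))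
    (derivative_eq_derivative_logS_mul hN) (by rw [constantCoeff_expS, hN])

lemma constantCoeff_smul_logS (N : ℝ⟦X⟧) (a : ℝ) : constantCoeff (a • logS N) = 0 := by
  simp [constantCoeff_logS]

lemma powS_eq_mul_powS_sub_one {N : ℝ⟦X⟧} (hN : constantCoeff N = 1) (η : ℝ) :
    powS N η = N * powS N (η - 1) := by
  have hsplit : η • logS N = logS N + (η - 1) • logS N := by module
  rw [powS, hsplit, expS_add (constantCoeff_logS N) (constantCoeff_smul_logS N _), expS_logS hN,
    powS]

lemma derivative_powS {N : ℝ⟦X⟧} (hN : constantCoeff N = 1) (η : ℝ) :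
    d⁄dX ℝ (powS N η) = η • (d⁄dX ℝ N * powS N (η - 1)) := by
  rw [powS, derivative_expS (constantCoeff_smul_logS N η), ← powS, powS_eq_mul_powS_sub_one hN,
    Derivation.map_smul, smul_mul_assoc, ← mul_assoc, ← derivative_eq_derivative_logS_mul hN]

lemma coeff_succ_powS_mul {N : ℝ⟦X⟧} (hN : constantCoeff N = 1) (η : ℝ) (n : ℕ) :
    coeff (n + 1) (powS N η) * (n + 1) =
      η * ∑ k ∈ range (n + 1),
        coeff k (powS N (η - 1)) * coeff (n - k + 1) N * (n - k + 1 : ℕ) := by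
  rw [← coeff_derivative, derivative_powS hN, map_smul, smul_eq_mul, mul_comm (d⁄dX ℝ N),
    coeff_mul, Nat.sum_antidiagonal_eq_sum_range_succ_mk]
  simp only [coeff_derivative, Nat.cast_add, Nat.cast_one, mul_assoc, Nat.succ_eq_add_one]

lemma xfac_succ (x : ℕ → ℝ) (n : ℕ) : xfac x (n + 1) = xfac x n * x (n + 1) :=
  prod_Icc_succ_top (by omega) x

theorem stmt1 (x : ℕ → ℝ) (hx : ∀ n, 1 ≤ n → 0 < x n)
    (N : PowerSeries ℝ) (hN : N = PowerSeries.mk fun n => 1 / xfac x n)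
    (q : ℕ → ℝ → ℝ)
    (hq : ∀ n η, q n η = xfac x n * PowerSeries.coeff n (powS N η)) :
    ∀ (n : ℕ) (η : ℝ),
      q (n + 1) η =
        η * (x (n + 1) / (n + 1)) *
          ∑ k ∈ Finset.range (n + 1),
            (xfac x n / (xfac x k * xfac x (n - k))) *
              ((n - k + 1 : ℝ) / x (n - k + 1)) * q k (η - 1) := by
  have hxfac (m : ℕ) : xfac x m ≠ 0 := (prod_pos fun k hk => hx k (mem_Icc.mp hk).1).ne'
  have hcoeffN (m : ℕ) : coeff m N = 1 / xfac x m := by rw [hN, coeff_mk]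
  have hN1 : constantCoeff N = 1 := by
    rw [← coeff_zero_eq_constantCoeff_apply, hcoeffN]
    simp [xfac]
  intro n η
  have hterm : ∀ k ∈ range (n + 1),
      xfac x n / (xfac x k * xfac x (n - k)) * ((n - k + 1 : ℝ) / x (n - k + 1)) * q k (η - 1) =
        xfac x n * (coeff k (powS N (η - 1)) * coeff (n - k + 1) N * (n - k + 1 : ℕ)) := by
    intro k hk
    have hkn : k ≤ n := Nat.lt_succ_iff.mp (mem_range.mp hk)
    have hx_ne : x (n - k + 1) ≠ 0 := (hx _ (by omega)).ne'
    rw [hq, hcoeffN, xfac_succ, Nat.cast_add, Nat.cast_sub hkn, Nat.cast_one]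
    field_simp [hxfac k, hxfac (n - k)]
  have hrec := coeff_succ_powS_mul hN1 η n
  rw [sum_congr rfl hterm, ← mul_sum, hq, xfac_succ]
  field_simp [hxfac n]
  linear_combination x (n + 1) * hrec
end

section
/- Conversely, if N(t) = ∑_{n≥0} t^n/x_n! (positive coefficients, N(0)=1) is such that the polynomials q_n defined by N(t)^η = ∑ q_n(η) t^n/x_n! satisfy q_n(η) > 0 for all η ∈ (0,1] and n ≥ 1, then log N(t) = ∑_{n≥1} (q_n'(0)/x_n!) t^n, with q_n'(0) ≥ 0 for all n and q_1'(0) = 1. In particular log N has all nonnegative coefficients. -/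
open PowerSeries Finset

/-! For `n ≥ 1`, `q n` is a polynomial in `η` that vanishes at `η = 0` (as `N^0 = 1`) and whose
linear coefficient is `x_n! · [tⁿ] log N`, the only contribution of `exp (η log N)` linear in `η`.
Positivity of `q n` on `(0, 1]` makes `0` a one-sided minimum, so that derivative is nonnegative. -/

theorem HasDerivAt.nonneg_of_isLocalMinOn_Ici {f : ℝ → ℝ} {f' a : ℝ} (hf : HasDerivAt f f' a)
    (hmin : IsLocalMinOn f (Set.Ici a) a) : 0 ≤ f' := by
  have hone : (1 : ℝ) ∈ posTangentConeAt (Set.Ici a) a :=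
    mem_posTangentConeAt_of_segment_subset
      ((segment_subset_Icc (by simp)).trans Set.Icc_subset_Ici_self)
  simpa using hmin.hasFDerivWithinAt_nonneg hf.hasFDerivAt.hasFDerivWithinAt hone

-- The `k = 0` summand of `logS` carries the junk factor `(-1) / 0 = 0`.
theorem coeff_zero_logS (N : PowerSeries ℝ) : coeff 0 (logS N) = 0 := by
  simp [logS]

theorem coeff_one_logS (N : PowerSeries ℝ) : coeff 1 (logS N) = coeff 1 N := by
  simp [logS, Finset.sum_range_succ, coeff_one]

theorem expS_zero : expS 0 = 1 := by
  ext n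
  simp [expS, Finset.sum_range_succ', zero_pow]

theorem coeff_expS_smul (F : PowerSeries ℝ) (n : ℕ) (η : ℝ) :
    coeff n (expS (η • F)) = ∑ k ∈ range (n + 1), coeff n (F ^ k) / k.factorial * η ^ k := by
  simp only [expS, coeff_mk, smul_pow, map_smul, smul_eq_mul]
  exact sum_congr rfl fun k _ => by ring

theorem hasDerivAt_coeff_expS_smul {F : PowerSeries ℝ} (hF : coeff 0 F = 0) (n : ℕ) :
    HasDerivAt (fun η : ℝ => coeff n (expS (η • F))) (coeff n F) 0 := by
  simp_rw [coeff_expS_smul]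
  refine (HasDerivAt.fun_sum fun k _ =>
    (hasDerivAt_pow k (0 : ℝ)).const_mul (coeff n (F ^ k) / k.factorial)).congr_deriv ?_
  rcases n with _ | n
  · simp [hF]
  · rw [sum_eq_single_of_mem 1 (by simp)]
    · simp
    · rintro (_ | _ | k) _ hk <;> simp_all

theorem stmt7 (x : ℕ → ℝ) (hx : ∀ n, 1 ≤ n → 0 < x n)
    (N : PowerSeries ℝ) (hN : N = PowerSeries.mk fun n => 1 / xfac x n)
    (q : ℕ → ℝ → ℝ)
    (hq : ∀ n η, q n η = xfac x n * PowerSeries.coeff n (powS N η))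
    (hpos : ∀ η ∈ Set.Ioc (0 : ℝ) 1, ∀ n, 1 ≤ n → 0 < q n η) :
    logS N = (PowerSeries.mk fun n => deriv (q n) 0 / xfac x n) ∧
    (∀ n : ℕ, 0 ≤ deriv (q n) 0) ∧
    deriv (q 1) 0 = 1 := by
  have hfac_pos : ∀ n, 0 < xfac x n := fun n => prod_pos fun k hk => hx k (mem_Icc.mp hk).1
  have hderiv : ∀ n, HasDerivAt (q n) (xfac x n * coeff n (logS N)) 0 := fun n => by
    rw [show q n = _ from funext (hq n)]
    exact (hasDerivAt_coeff_expS_smul (coeff_zero_logS N) n).const_mul _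
  have hq_zero : ∀ n, 1 ≤ n → q n 0 = 0 := fun n hn => by
    simp [hq, powS, expS_zero, coeff_one, Nat.one_le_iff_ne_zero.mp hn]
  refine ⟨?_, fun n => ?_, ?_⟩
  · ext n
    rw [coeff_mk, (hderiv n).deriv, mul_div_cancel_left₀ _ (hfac_pos n).ne']
  · rcases Nat.eq_zero_or_pos n with rfl | hn
    · simp [(hderiv 0).deriv, coeff_zero_logS]
    · refine (hderiv n).deriv ▸ (hderiv n).nonneg_of_isLocalMinOn_Ici ?_
      filter_upwards [Icc_mem_nhdsGE zero_lt_one] with η hη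
      rcases hη.1.eq_or_lt with rfl | hη0
      · rfl
      · rw [hq_zero n hn]
        exact (hpos η ⟨hη0, hη.2⟩ n hn).le
  · rw [(hderiv 1).deriv, coeff_one_logS, hN, coeff_mk]
    exact mul_one_div_cancel (hfac_pos 1).ne'
end

section
/- For the q-exponential distribution 𝔭_k^{(n)}(η) = C(n,k)(ηα)_k((1−η)α)_{n−k}/(α)_n, the quantity c_n equals n(n−1)α/(1+α), and hence the variance is ∑_k k²𝔭_k^{(n)} − (ηn)² = n²η(1−η)(1 + α/n)/(1 + α). -/
open Finset Polynomial

noncomputable def P (k : ℕ) (x : ℝ) : ℝ := (ascPochhammer ℝ k).eval x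

lemma P_succ_left (k : ℕ) (x : ℝ) : P (k+1) x = x * P k (x+1) := by
  simp [P, ascPochhammer_succ_left, eval_comp]

lemma P_succ_right (k : ℕ) (x : ℝ) : P (k+1) x = P k x * (x + k) :=
  ascPochhammer_succ_eval k x

lemma vand (n : ℕ) (x y : ℝ) :
    ∑ k ∈ range (n+1), (n.choose k : ℝ) * P k x * P (n-k) y = P n (x+y) := by
  induction n generalizing x y with
  | zero => simp [P]
  | succ n ih =>
    rw [Finset.sum_range_succ']
    have key : ∀ k ∈ range (n+1),
        ((n+1).choose (k+1) : ℝ) * P (k+1) x * P (n+1-(k+1)) y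
        = (n.choose k : ℝ) * (P k x * (x+k)) * P (n-k) y
          + (n.choose (k+1) : ℝ) * P (k+1) x * P (n-k) y := by
      intro k hk
      rw [Nat.choose_succ_succ]
      rw [P_succ_right]
      push_cast
      ring_nf
      simp only [Nat.succ_eq_add_one, Nat.add_comm 1 k]
      ring
    rw [Finset.sum_congr rfl key, Finset.sum_add_distrib]
    set g : ℕ → ℝ := fun k => (n.choose k : ℝ) * P k x * P (n+1-k) y with hgdef
    have e1 : ∑ k ∈ range (n+2), g k = ∑ k ∈ range (n+1), g (k+1) + g 0 :=
      Finset.sum_range_succ' g (n+1)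
    have e2 : ∑ k ∈ range (n+2), g k = ∑ k ∈ range (n+1), g k + g (n+1) :=
      Finset.sum_range_succ g (n+1)
    have hg : g (n+1) = 0 := by simp [hgdef, Nat.choose_succ_self]
    have hB : ∑ k ∈ range (n+1), g (k+1) + g 0 = ∑ k ∈ range (n+1), g k := by
      rw [← e1, e2, hg, add_zero]
    have hs1 : ∀ k ∈ range (n+1),
        (n.choose (k+1) : ℝ) * P (k+1) x * P (n-k) y = g (k+1) := by
      intro k hk
      simp [hgdef, Nat.succ_sub_succ]
    have hf0 : ((n+1).choose 0 : ℝ) * P 0 x * P (n+1-0) y = g 0 := by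
      simp [hgdef]
    rw [Finset.sum_congr rfl hs1, add_assoc, hf0, hB, ← Finset.sum_add_distrib]
    have key2 : ∀ k ∈ range (n+1),
        (n.choose k : ℝ) * (P k x * (x+k)) * P (n-k) y + g k
        = ((x+y)+n) * ((n.choose k : ℝ) * P k x * P (n-k) y) := by
      intro k hk
      have hk2 : k ≤ n := by simpa using Nat.lt_succ_iff.mp (Finset.mem_range.mp hk)
      have h1 : n + 1 - k = (n-k)+1 := by omega
      simp only [hgdef]
      rw [h1, P_succ_right, Nat.cast_sub hk2]
      ring
    rw [Finset.sum_congr rfl key2, ← Finset.mul_sum, ih, P_succ_right]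
    ring

lemma moment1 (n : ℕ) (x y : ℝ) :
    ∑ k ∈ range (n+2), (k : ℝ) * (((n+1).choose k : ℝ) * P k x * P (n+1-k) y)
      = (n+1) * x * P n ((x+1)+y) := by
  rw [Finset.sum_range_succ']
  have key : ∀ k ∈ range (n+1),
      ((k+1 : ℕ) : ℝ) * (((n+1).choose (k+1) : ℝ) * P (k+1) x * P (n+1-(k+1)) y)
      = ((n:ℝ)+1) * x * ((n.choose k : ℝ) * P k (x+1) * P (n-k) y) := by
    intro k hk
    have hc : (n+1) * n.choose k = (n+1).choose (k+1) * (k+1) :=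
      Nat.add_one_mul_choose_eq n k
    have hc2 : ((n:ℝ)+1) * (n.choose k : ℝ)
        = ((n+1).choose (k+1) : ℝ) * ((k:ℝ)+1) := by
      exact_mod_cast congrArg (Nat.cast (R := ℝ)) hc
    have hs : n + 1 - (k+1) = n - k := by omega
    rw [hs, P_succ_left]
    push_cast
    linear_combination (-(x * P k (x+1) * P (n-k) y)) * hc2
  rw [Finset.sum_congr rfl key]
  simp only [Nat.cast_zero, zero_mul, add_zero]
  rw [← Finset.mul_sum, vand]

lemma moment2 (n : ℕ) (x y : ℝ) :
    ∑ k ∈ range (n+3), (k : ℝ) * ((k:ℝ)-1) * (((n+2).choose k : ℝ) * P k x * P (n+2-k) y)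
      = (n+2) * (n+1) * (x * (x+1)) * P n ((x+2)+y) := by
  rw [Finset.sum_range_succ', Finset.sum_range_succ']
  have key : ∀ k ∈ range (n+1),
      ((k+1+1 : ℕ) : ℝ) * (((k+1+1 : ℕ):ℝ)-1) *
        (((n+2).choose (k+1+1) : ℝ) * P (k+1+1) x * P (n+2-(k+1+1)) y)
      = ((n:ℝ)+2) * ((n:ℝ)+1) * (x * (x+1)) * ((n.choose k : ℝ) * P k (x+2) * P (n-k) y) := by
    intro k hk
    have hc1 : (n+2) * (n+1).choose (k+1) = (n+2).choose (k+2) * (k+2) :=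
      Nat.add_one_mul_choose_eq (n+1) (k+1)
    have hc0 : (n+1) * n.choose k = (n+1).choose (k+1) * (k+1) :=
      Nat.add_one_mul_choose_eq n k
    have hc : (n+2) * ((n+1) * n.choose k) = (n+2).choose (k+2) * (k+2) * (k+1) := by
      rw [hc0]
      calc (n+2) * ((n+1).choose (k+1) * (k+1))
          = (n+2) * (n+1).choose (k+1) * (k+1) := by ring
        _ = (n+2).choose (k+2) * (k+2) * (k+1) := by rw [hc1]
    have hc2 : ((n:ℝ)+2) * (((n:ℝ)+1) * (n.choose k : ℝ))
        = ((n+2).choose (k+2) : ℝ) * ((k:ℝ)+2) * ((k:ℝ)+1) := by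
      exact_mod_cast congrArg (Nat.cast (R := ℝ)) hc
    have hs : n + 2 - (k+1+1) = n - k := by omega
    have hP : P (k+1+1) x = x * ((x+1) * P k (x+2)) := by
      rw [P_succ_left, P_succ_left]
      ring_nf
    rw [hs, hP]
    push_cast
    linear_combination (-(x * (x+1) * P k (x+2) * P (n-k) y)) * hc2
  rw [Finset.sum_congr rfl key]
  push_cast
  simp only [zero_mul, mul_zero, add_zero, zero_sub, one_mul, sub_self, zero_add]
  rw [← Finset.mul_sum, vand]

theorem stmt15 (α : ℝ) (hα : 0 < α)
    (p : ℕ → ℕ → ℝ → ℝ)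
    (hp : ∀ n k η, p n k η =
      (n.choose k : ℝ) * (ascPochhammer ℝ k).eval (η * α)
        * (ascPochhammer ℝ (n - k)).eval ((1 - η) * α)
        / (ascPochhammer ℝ n).eval α) :
    ∀ (n : ℕ), ∀ η ∈ Set.Icc (0 : ℝ) 1,
      (∑ k ∈ Finset.range (n + 1), (k : ℝ) ^ 2 * p n k η
        = η * n ^ 2 + η * (η - 1) * (n * (n - 1) * α / (1 + α))) ∧
      ((∑ k ∈ Finset.range (n + 1), (k : ℝ) ^ 2 * p n k η) - (η * n) ^ 2
        = n ^ 2 * η * (1 - η) * (1 + α / n) / (1 + α)) := by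
  intro n η hη
  have hα1 : (1 : ℝ) + α ≠ 0 := by positivity
  set x := η * α with hx
  set y := (1 - η) * α with hy
  have hxy : x + y = α := by rw [hx, hy]; ring
  have hsum : ∑ k ∈ Finset.range (n + 1), (k : ℝ) ^ 2 * p n k η
      = (∑ k ∈ Finset.range (n + 1),
          (k : ℝ) ^ 2 * ((n.choose k : ℝ) * P k x * P (n-k) y)) / P n α := by
    rw [Finset.sum_div]
    refine Finset.sum_congr rfl fun k hk => ?_
    rw [hp]
    simp only [P]
    ring
  have hsplit : ∑ k ∈ Finset.range (n + 1),
        (k : ℝ) ^ 2 * ((n.choose k : ℝ) * P k x * P (n-k) y)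
      = (∑ k ∈ Finset.range (n + 1),
          (k : ℝ) * ((k:ℝ)-1) * ((n.choose k : ℝ) * P k x * P (n-k) y))
        + ∑ k ∈ Finset.range (n + 1),
          (k : ℝ) * ((n.choose k : ℝ) * P k x * P (n-k) y) := by
    rw [← Finset.sum_add_distrib]
    refine Finset.sum_congr rfl fun k hk => ?_
    ring
  have main : ∑ k ∈ Finset.range (n + 1), (k : ℝ) ^ 2 * p n k η
      = η * n ^ 2 + η * (η - 1) * (n * (n - 1) * α / (1 + α)) := by
    match n with
    | 0 =>
      rw [hsum, hsplit]
      norm_num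
    | 1 =>
      rw [hsum, hsplit]
      simp only [Finset.sum_range_succ, Finset.sum_range_zero]
      simp [P, hx, ascPochhammer_one]
      field_simp
    | (m+2) =>
      rw [hsum, hsplit]
      rw [moment1 (m+1) x y, show m+2+1 = m+3 from rfl, moment2 m x y]
      rw [show x+1+y = α+1 by rw [← hxy]; ring, show x+2+y = α+2 by rw [← hxy]; ring]
      have hD1 : P (m+1) (α+1) = (α+1) * P m (α+2) := by
        rw [P_succ_left, show α+1+1 = α+2 by ring]
      have hD : P (m+2) α = α * ((α+1) * P m (α+2)) := by
        rw [P_succ_left, hD1]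
      have hQ : P m (α+2) ≠ 0 := ne_of_gt (ascPochhammer_pos m (α+2) (by linarith))
      rw [hD, hD1, hx]
      push_cast
      field_simp
      ring
  refine ⟨main, ?_⟩
  rw [main]
  match n with
  | 0 => norm_num
  | (m+1) =>
    have hn : ((m:ℝ)+1) ≠ 0 := by positivity
    push_cast
    field_simp
    ring
end

section
/- Uniqueness of the Leibniz rule solution: let (y_n)_{n≥1} be positive reals with y_1 > 0 and let q_n be polynomials with q_0 = 1, q_1(η) = η, q_n(1) = 1 for all n. If the quantities ϖ_k^n(η) = ((y_1⋯y_n)/((y_1⋯y_k)(y_1⋯y_{n−k}))) q_k(η) q_{n−k}(1−η) satisfy ϖ_k^{n−1} = ϖ_k^n + ϖ_{k+1}^n for all n ≥ 1, 0 ≤ k ≤ n−1 and all η, then either there exists α with y_k/y_1 = α/(k−1+α) and q_n(η) = ∏_{k=1}^n (k−1+αη)/(k−1+α), or y_k/y_1 = 1 for all k and q_n(η) = η^n. -/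
/-!
The `k = 0` instance of the Leibniz rule reads
`q_{n+1}(η) = q_n(η) (1 + (y_{n+1}/y_1)(η - 1))`, so `q_n` is the product of these factors and
only the ratios `y_k / y_1` remain to be found. The `k = 1` instance at `η = -1`, after cancelling
the common factor `q_n(2) > 0`, becomes the Cauchy–Pexider recurrence
`Z(n+2) = Z(n+1) + Z(2) - 1` for `Z(k) = y_1 / y_k`, whence `Z(k) = 1 + (k - 1) μ` with
`μ = Z(2) - 1`. For `μ = 0` this gives `q_n(η) = ηⁿ`, and otherwise `α = μ⁻¹`.
-/

open Finset

/-- Deformed factorial `y_n! = y_1 y_2 ⋯ y_n`, with `y_0! = 1`. -/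
noncomputable def yfac (y : ℕ → ℝ) (n : ℕ) : ℝ := ∏ k ∈ Finset.Icc 1 n, y k

/-- The paper's `ϖ_k^n(η)`. -/
noncomputable def leibnizWeight (y : ℕ → ℝ) (q : ℕ → ℝ → ℝ) (n k : ℕ) (η : ℝ) : ℝ :=
  yfac y n / (yfac y k * yfac y (n - k)) * q k η * q (n - k) (1 - η)

structure IsLeibnizSolution (y : ℕ → ℝ) (q : ℕ → ℝ → ℝ) : Prop where
  pos : ∀ n, 1 ≤ n → 0 < y n
  q_zero : ∀ η, q 0 η = 1
  q_one : ∀ η, q 1 η = η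
  rule : ∀ n k η, k ≤ n →
    leibnizWeight y q n k η = leibnizWeight y q (n + 1) k η + leibnizWeight y q (n + 1) (k + 1) η

lemma add_inv_eq_div {x μ : ℝ} (hμ : μ ≠ 0) : x + μ⁻¹ = (1 + x * μ) / μ := by
  field_simp
  ring

lemma inv_one_add_mul_eq_div {x μ : ℝ} (hμ : μ ≠ 0) (hx : 1 + x * μ ≠ 0) :
    (1 + x * μ)⁻¹ = μ⁻¹ / (x + μ⁻¹) := by
  rw [add_inv_eq_div hμ]
  field_simp

lemma one_add_inv_one_add_mul_mul_sub_one {x μ : ℝ} (η : ℝ) (hμ : μ ≠ 0) (hx : 1 + x * μ ≠ 0) :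
    1 + (1 + x * μ)⁻¹ * (η - 1) = (x + μ⁻¹ * η) / (x + μ⁻¹) := by
  rw [add_inv_eq_div hμ]
  field_simp
  ring

section

variable {y : ℕ → ℝ} {q : ℕ → ℝ → ℝ}

lemma yfac_zero : yfac y 0 = 1 := by simp [yfac]

lemma yfac_succ (n : ℕ) : yfac y (n + 1) = yfac y n * y (n + 1) :=
  prod_Icc_succ_top (Nat.le_add_left 1 n) y

lemma yfac_pos (hy : ∀ n, 1 ≤ n → 0 < y n) (n : ℕ) : 0 < yfac y n :=
  prod_pos fun k hk => hy k (mem_Icc.mp hk).1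

lemma leibnizWeight_zero (hy : ∀ n, 1 ≤ n → 0 < y n) (hq0 : ∀ η, q 0 η = 1) (n : ℕ) (η : ℝ) :
    leibnizWeight y q n 0 η = q n (1 - η) := by
  simp [leibnizWeight, yfac_zero, hq0, (yfac_pos hy n).ne']

lemma leibnizWeight_one (hy : ∀ n, 1 ≤ n → 0 < y n) (hq1 : ∀ η, q 1 η = η) (n : ℕ) (η : ℝ) :
    leibnizWeight y q (n + 1) 1 η = y (n + 1) / y 1 * η * q n (1 - η) := by
  have := (yfac_pos hy n).ne'
  simp only [leibnizWeight, Nat.add_sub_cancel, hq1, yfac_succ n, zero_add, yfac_succ 0, yfac_zero]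
  field_simp

lemma leibnizWeight_two (hy : ∀ n, 1 ≤ n → 0 < y n) (n : ℕ) (η : ℝ) :
    leibnizWeight y q (n + 2) 2 η = y (n + 2) * y (n + 1) / (y 1 * y 2) * q 2 η * q n (1 - η) := by
  have := (yfac_pos hy n).ne'
  simp only [leibnizWeight, Nat.add_sub_cancel, yfac_succ, zero_add, yfac_zero]
  field_simp

namespace IsLeibnizSolution

lemma q_succ (h : IsLeibnizSolution y q) (n : ℕ) (t : ℝ) :
    q (n + 1) t = q n t * (1 + y (n + 1) / y 1 * (t - 1)) := by
  have hrule := h.rule n 0 (1 - t) n.zero_le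
  rw [leibnizWeight_zero h.pos h.q_zero, leibnizWeight_zero h.pos h.q_zero,
    leibnizWeight_one h.pos h.q_one, sub_sub_cancel] at hrule
  linear_combination -hrule

lemma q_eq_prod (h : IsLeibnizSolution y q) (n : ℕ) (t : ℝ) :
    q n t = ∏ k ∈ Icc 1 n, (1 + y k / y 1 * (t - 1)) := by
  induction n with
  | zero => simp [h.q_zero]
  | succ n ih => rw [h.q_succ, ih, prod_Icc_succ_top (Nat.le_add_left 1 n)]

lemma q_two_pos (h : IsLeibnizSolution y q) (n : ℕ) : 0 < q n 2 := by
  rw [h.q_eq_prod]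
  refine prod_pos fun k hk => ?_
  have := div_pos (h.pos k (mem_Icc.mp hk).1) (h.pos 1 le_rfl)
  linarith

lemma inv_ratio_add_two (h : IsLeibnizSolution y q) (n : ℕ) :
    y 1 / y (n + 2) = y 1 / y (n + 1) + y 1 / y 2 - 1 := by
  have hrule := h.rule (n + 1) 1 (-1) (by omega)
  rw [leibnizWeight_one h.pos h.q_one, leibnizWeight_one h.pos h.q_one, leibnizWeight_two h.pos,
    h.q_succ n, h.q_succ 1, h.q_one] at hrule
  have := (h.q_two_pos n).ne'
  have := (h.pos 1 le_rfl).ne'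
  have := (h.pos 2 (by norm_num)).ne'
  have := (h.pos (n + 1) (by omega)).ne'
  have := (h.pos (n + 2) (by omega)).ne'
  norm_num [show n + 1 + 1 = n + 2 from rfl] at hrule
  field_simp at hrule
  field_simp
  linear_combination -hrule

lemma inv_ratio_eq (h : IsLeibnizSolution y q) (n : ℕ) :
    y 1 / y (n + 1) = 1 + n * (y 1 / y 2 - 1) := by
  induction n with
  | zero => simp [(h.pos 1 le_rfl).ne']
  | succ n ih =>
    rw [h.inv_ratio_add_two, ih]
    push_cast
    ring

lemma ratio_eq (h : IsLeibnizSolution y q) {k : ℕ} (hk : 1 ≤ k) :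
    y k / y 1 = (1 + (k - 1) * (y 1 / y 2 - 1))⁻¹ := by
  obtain ⟨n, rfl⟩ := Nat.exists_eq_add_of_le' hk
  rw [← inv_div, h.inv_ratio_eq]
  push_cast
  ring

end IsLeibnizSolution

end

theorem stmt17_general (y : ℕ → ℝ) (hy : ∀ n, 1 ≤ n → 0 < y n)
    (q : ℕ → ℝ → ℝ)
    (hq0 : ∀ η, q 0 η = 1)
    (hq1 : ∀ η : ℝ, q 1 η = η)
    (ϖ : ℕ → ℕ → ℝ → ℝ)
    (hϖ : ∀ n k η, ϖ n k η =
      (yfac y n / (yfac y k * yfac y (n - k))) * q k η * q (n - k) (1 - η))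
    (hleib : ∀ n, 1 ≤ n → ∀ k ≤ n - 1, ∀ η : ℝ, ϖ (n - 1) k η = ϖ n k η + ϖ n (k + 1) η) :
    (∃ α : ℝ,
      (∀ k, 1 ≤ k → y k / y 1 = α / ((k : ℝ) - 1 + α)) ∧
      (∀ (n : ℕ) (η : ℝ),
        q n η = ∏ k ∈ Finset.Icc 1 n, (((k : ℝ) - 1 + α * η) / ((k : ℝ) - 1 + α)))) ∨
    ((∀ k, 1 ≤ k → y k / y 1 = 1) ∧ ∀ (n : ℕ) (η : ℝ), q n η = η ^ n) := by
  obtain rfl : ϖ = leibnizWeight y q := funext fun n => funext fun k => funext (hϖ n k)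
  have h : IsLeibnizSolution y q :=
    ⟨hy, hq0, hq1, fun n k η hk => hleib (n + 1) n.succ_pos k hk η⟩
  set μ := y 1 / y 2 - 1
  have hratio : ∀ k : ℕ, 1 ≤ k → y k / y 1 = (1 + ((k : ℝ) - 1) * μ)⁻¹ := fun k hk => h.ratio_eq hk
  have hden : ∀ k : ℕ, 1 ≤ k → 1 + ((k : ℝ) - 1) * μ ≠ 0 := fun k hk =>
    (inv_pos.mp (hratio k hk ▸ div_pos (hy k hk) (hy 1 le_rfl))).ne'
  rcases eq_or_ne μ 0 with hμ | hμ
  · right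
    have hr : ∀ k, 1 ≤ k → y k / y 1 = 1 := fun k hk => by simp [hratio k hk, hμ]
    refine ⟨hr, fun n η => ?_⟩
    rw [h.q_eq_prod, prod_congr rfl fun k hk => by rw [hr k (mem_Icc.mp hk).1, one_mul, add_sub_cancel],
      prod_const, Nat.card_Icc, Nat.add_sub_cancel]
  · left
    refine ⟨μ⁻¹, fun k hk => ?_, fun n η => (h.q_eq_prod n η).trans (prod_congr rfl fun k hk => ?_)⟩
    · rw [hratio k hk, inv_one_add_mul_eq_div hμ (hden k hk)]
    · rw [hratio k (mem_Icc.mp hk).1,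
        one_add_inv_one_add_mul_mul_sub_one η hμ (hden k (mem_Icc.mp hk).1)]

theorem stmt17 (y : ℕ → ℝ) (hy : ∀ n, 1 ≤ n → 0 < y n)
    (q : ℕ → ℝ → ℝ)
    (hqpoly : ∀ n, ∃ P : Polynomial ℝ, ∀ η, q n η = P.eval η)
    (hq0 : ∀ η, q 0 η = 1)
    (hq1 : ∀ η : ℝ, q 1 η = η)
    (hqone : ∀ n, q n 1 = 1)
    (ϖ : ℕ → ℕ → ℝ → ℝ)
    (hϖ : ∀ n k η, ϖ n k η =
      (yfac y n / (yfac y k * yfac y (n - k))) * q k η * q (n - k) (1 - η))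
    (hleib : ∀ n, 1 ≤ n → ∀ k ≤ n - 1, ∀ η : ℝ, ϖ (n - 1) k η = ϖ n k η + ϖ n (k + 1) η) :
    (∃ α : ℝ,
      (∀ k, 1 ≤ k → y k / y 1 = α / ((k : ℝ) - 1 + α)) ∧
      (∀ (n : ℕ) (η : ℝ),
        q n η = ∏ k ∈ Finset.Icc 1 n, (((k : ℝ) - 1 + α * η) / ((k : ℝ) - 1 + α)))) ∨
    ((∀ k, 1 ≤ k → y k / y 1 = 1) ∧ ∀ (n : ℕ) (η : ℝ), q n η = η ^ n) :=
  stmt17_general y hy q hq0 hq1 ϖ hϖ hleib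
end

section
/- If N = e^F where F(t) = ∑_{n≥1} a_n t^n with a_1 = 1, a_n ≥ 0 for all n, and ∑ a_n < ∞, then the deformed factorial f_n := ∫_0^∞ q_n(η) e^{−η} dη satisfies f_n ≥ x_n! for all n, where x_n! = n!/B_n(a_1,…,a_n) and q_n is the associated polynomial. -/
/-!
Since `log (exp F) = F` (compare derivatives, using the chain rule for substitution), the
coefficient of `X^n` in `N^η = exp (η F)` is `∑_{k ≤ n} [X^n]F^k η^k / k!`. Integrating against
`e^{-η}` turns `η^k / k!` into `1`, so `f_n = x_n! ∑_{k ≤ n} [X^n]F^k`. Every term is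
nonnegative, and the term `k = n` is `a_1^n = 1`.
-/

open PowerSeries Finset

namespace PowerSeries

section CommSemiring

variable {R : Type*} [CommSemiring R]

theorem coeff_pow_eq_zero_of_lt {G : R⟦X⟧} (hG : constantCoeff G = 0) {m k : ℕ} (h : m < k) :
    coeff m (G ^ k) = 0 :=
  coeff_of_lt_order m <| (Nat.cast_lt.2 h).trans_le (le_order_pow_of_constantCoeff_eq_zero k hG)

theorem coeff_self_pow {G : R⟦X⟧} (hG : constantCoeff G = 0) (n : ℕ) :
    coeff n (G ^ n) = coeff 1 G ^ n := by
  obtain ⟨H, rfl⟩ := X_dvd_iff.2 hG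
  simpa [mul_pow, coeff_zero_eq_constantCoeff] using coeff_X_pow_mul (H ^ n) n 0

theorem coeff_pow_nonneg [PartialOrder R] [IsOrderedRing R] {F : R⟦X⟧}
    (hF : ∀ m, 0 ≤ coeff m F) (k m : ℕ) : 0 ≤ coeff m (F ^ k) := by
  induction k generalizing m with
  | zero => rw [pow_zero, coeff_one]; split_ifs <;> simp
  | succ k ih =>
    rw [pow_succ, coeff_mul]
    exact sum_nonneg fun p _ => mul_nonneg (ih p.1) (hF p.2)

end CommSemiring

section CommRing

variable {R : Type*} [CommRing R]

theorem coeff_subst_eq_sum_range {f G : R⟦X⟧} (hG : constantCoeff G = 0) (n : ℕ) :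
    coeff n (f.subst G) = ∑ d ∈ range (n + 1), coeff d f * coeff n (G ^ d) := by
  rw [coeff_subst' (HasSubst.of_constantCoeff_zero' hG),
    finsum_eq_sum_of_support_subset (s := range (n + 1))]
  · simp only [smul_eq_mul]
  · intro d hd
    by_contra h
    simp_all [coeff_pow_eq_zero_of_lt hG (by simpa using h : n < d)]

theorem constantCoeff_subst_of_constantCoeff_eq_zero {f G : R⟦X⟧} (hG : constantCoeff G = 0) :
    constantCoeff (f.subst G) = constantCoeff f := by
  rw [← coeff_zero_eq_constantCoeff_apply, ← coeff_zero_eq_constantCoeff_apply,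
    coeff_subst_eq_sum_range hG]
  simp

end CommRing

section Field

variable {K : Type*} [Field K] [CharZero K]

theorem derivative_log_mul_one_add_X : d⁄dX K (log K) * (1 + X) = 1 := by
  ext (_ | n)
  · simp [deriv_log]
  · simp [deriv_log, mul_add, coeff_one, pow_succ]

theorem logOf_subst_exp {F : K⟦X⟧} (hF : constantCoeff F = 0) :
    logOf ((exp K).subst F) = F := by
  set E : K⟦X⟧ := (exp K).subst F
  have hE0 : constantCoeff E = 1 := by
    rw [constantCoeff_subst_of_constantCoeff_eq_zero hF, constantCoeff_exp]
  have hE : HasSubst (E - 1) := HasSubst.of_constantCoeff_zero' (by simp [hE0])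
  have hdE : d⁄dX K E = E * d⁄dX K F := by
    rw [derivative_subst (HasSubst.of_constantCoeff_zero' hF), derivative_exp]
  have hE_subst : (1 + X : K⟦X⟧).subst (E - 1) = E := by
    rw [subst_add hE, subst_X hE, ← coe_substAlgHom hE, map_one]
    ring
  have hinv : (d⁄dX K (log K)).subst (E - 1) * E = 1 := by
    calc _ = (d⁄dX K (log K)).subst (E - 1) * (1 + X : K⟦X⟧).subst (E - 1) := by
          rw [hE_subst]
      _ = 1 := by
          rw [← subst_mul hE, derivative_log_mul_one_add_X, ← coe_substAlgHom hE, map_one]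
  refine derivative.ext ?_ (by rw [constantCoeff_logOf hE0, hF])
  rw [logOf_eq, derivative_subst hE, map_sub, derivative_one, sub_zero, hdE, ← mul_assoc, hinv,
    one_mul]

end Field

end PowerSeries

theorem expS_eq_subst_exp {F : PowerSeries ℝ} (hF : constantCoeff F = 0) :
    expS F = (exp ℝ).subst F := by
  ext n
  rw [expS, coeff_mk, coeff_subst_eq_sum_range hF]
  simp

theorem logS_eq_logOf {N : PowerSeries ℝ} (hN : constantCoeff N = 1) : logS N = logOf N := by
  ext n
  rw [logS, coeff_mk, logOf_eq, coeff_subst_eq_sum_range (by simp [hN])]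
  refine sum_congr rfl fun d _ => ?_
  rcases eq_or_ne d 0 with rfl | hd <;> simp [*]

theorem logS_expS {F : PowerSeries ℝ} (hF : constantCoeff F = 0) : logS (expS F) = F := by
  have h1 : constantCoeff ((exp ℝ).subst F) = 1 := by
    rw [constantCoeff_subst_of_constantCoeff_eq_zero hF, constantCoeff_exp]
  rw [expS_eq_subst_exp hF, logS_eq_logOf h1, logOf_subst_exp hF]

open Nat

theorem coeff_powS_expS {F : PowerSeries ℝ} (hF : constantCoeff F = 0) (n : ℕ) (η : ℝ) :
    coeff n (powS (expS F) η) = ∑ k ∈ range (n + 1), coeff n (F ^ k) / k ! * η ^ k := by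
  rw [powS, logS_expS hF, expS, coeff_mk]
  refine sum_congr rfl fun k _ => ?_
  rw [smul_pow, coeff_smul, smul_eq_mul]
  ring

open MeasureTheory Set Real

theorem integral_exp_neg_mul_pow (k : ℕ) : ∫ x in Ioi (0 : ℝ), exp (-x) * x ^ k = k ! := by
  have h := Gamma_eq_integral (s := k + 1) (by positivity)
  simp only [add_sub_cancel_right, rpow_natCast, Gamma_nat_eq_factorial] at h
  exact h.symm

theorem integrableOn_exp_neg_mul_pow (k : ℕ) :
    IntegrableOn (fun x : ℝ => exp (-x) * x ^ k) (Ioi 0) := by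
  simpa only [add_sub_cancel_right, rpow_natCast] using
    GammaIntegral_convergent (s := k + 1) (by positivity)

theorem integral_sum_mul_pow_mul_exp_neg (s : Finset ℕ) (c : ℕ → ℝ) :
    ∫ x in Ioi (0 : ℝ), (∑ k ∈ s, c k * x ^ k) * exp (-x) = ∑ k ∈ s, c k * k ! := by
  simp_rw [sum_mul, mul_assoc, mul_comm (_ ^ _) (exp _)]
  rw [integral_finsetSum _ fun k _ => (integrableOn_exp_neg_mul_pow k).const_mul (c k)]
  simp_rw [integral_const_mul, integral_exp_neg_mul_pow]

theorem stmt18_general (a : ℕ → ℝ) (ha0 : a 0 = 0) (ha1 : a 1 = 1) (ha : ∀ n, 0 ≤ a n)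
    (N : PowerSeries ℝ) (hN : N = expS (PowerSeries.mk a))
    (xf : ℕ → ℝ) (hxf : ∀ n, xf n = (PowerSeries.coeff n N)⁻¹)
    (q : ℕ → ℝ → ℝ)
    (hq : ∀ n η, q n η = xf n * PowerSeries.coeff n (powS N η))
    (f : ℕ → ℝ)
    (hf : ∀ n, f n = ∫ η in Set.Ioi (0 : ℝ), q n η * Real.exp (-η)) :
    ∀ n : ℕ, xf n ≤ f n := by
  intro n
  set F := PowerSeries.mk a
  have hF0 : constantCoeff F = 0 := by rw [← coeff_zero_eq_constantCoeff_apply, coeff_mk, ha0]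
  have hF : ∀ m, 0 ≤ coeff m F := fun m => (coeff_mk m a).symm ▸ ha m
  have hf_eq : f n = xf n * ∑ k ∈ range (n + 1), coeff n (F ^ k) := by
    simp_rw [hf, hq, hN, coeff_powS_expS hF0, mul_sum, ← mul_assoc,
      integral_sum_mul_pow_mul_exp_neg]
    refine sum_congr rfl fun k _ => ?_
    field_simp
  have hxf_nonneg : 0 ≤ xf n := by
    rw [hxf, hN, expS, coeff_mk]
    exact inv_nonneg.2 <| sum_nonneg fun k _ => mul_nonneg (by positivity) (coeff_pow_nonneg hF k n)
  have hone_le : 1 ≤ ∑ k ∈ range (n + 1), coeff n (F ^ k) :=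
    calc (1 : ℝ) = coeff n (F ^ n) := by rw [coeff_self_pow hF0, coeff_mk, ha1, one_pow]
      _ ≤ _ := single_le_sum (fun k _ => coeff_pow_nonneg hF k n) (self_mem_range_succ n)
  calc xf n = xf n * 1 := (mul_one _).symm
    _ ≤ f n := hf_eq ▸ mul_le_mul_of_nonneg_left hone_le hxf_nonneg

theorem stmt18 (a : ℕ → ℝ) (ha0 : a 0 = 0) (ha1 : a 1 = 1) (ha : ∀ n, 0 ≤ a n)
    (hsum : Summable a)
    (N : PowerSeries ℝ) (hN : N = expS (PowerSeries.mk a))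
    (xf : ℕ → ℝ) (hxf : ∀ n, xf n = (PowerSeries.coeff n N)⁻¹)
    (q : ℕ → ℝ → ℝ)
    (hq : ∀ n η, q n η = xf n * PowerSeries.coeff n (powS N η))
    (f : ℕ → ℝ)
    (hf : ∀ n, f n = ∫ η in Set.Ioi (0 : ℝ), q n η * Real.exp (-η)) :
    ∀ n : ℕ, xf n ≤ f n :=
  stmt18_general a ha0 ha1 ha N hN xf hxf q hq f hf
end
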